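/- Let μ ≥ 1 be rational. Then the limit κ̂(μ) = lim_{L→∞} (1/(μL)) log N̂_L(μ), taken along positive integers L for which μL and (μ−1)L/2 are integers, exists and is finite. -/

import Mathlib

/-!
A directed path is self-avoiding iff no vertical step is immediately undone: a backtrack-free
stretch with no net horizontal displacement is a straight vertical segment. So if a self-avoiding
path ending at `(L₁, 0)` is followed either by a self-avoiding path to `(L₂, 0)` or by its mirror
image in the x-axis, one of the two results is self-avoiding, whence
`N̂_{L₁}(μ) N̂_{L₂}(μ) ≤ 2 N̂_{L₁+L₂}(μ)`. The admissible `L` are multiples of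
`D = den ((μ - 1) / 2)`; along `L = D t` the sequence `log N̂` is superadditive up to `log 2`, and
it is finite (the staircase path exists) and at most `μL log 3`, so Fekete's lemma gives the limit.
-/

open Filter

/-- The three allowed steps of a directed path: right, up, down. -/
def dstep : Fin 3 → ℤ × ℤ := ![(1, 0), (0, 1), (0, -1)]

/-- Position of the path after `k` steps, starting at the origin. -/
def pathPos (s : List (Fin 3)) (k : ℕ) : ℤ × ℤ := ((s.take k).map dstep).sum

/-- A path is self-avoiding if the sites it visits (including the start) are
pairwise distinct. -/
def SelfAvoiding (s : List (Fin 3)) : Prop :=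
  ∀ j k : ℕ, j ≤ s.length → k ≤ s.length → pathPos s j = pathPos s k → j = k

/-- Number of `n`-step directed self-avoiding paths from the origin to `e`. -/
noncomputable def numPaths (n : ℕ) (e : ℤ × ℤ) : ℕ :=
  Set.ncard {s : List (Fin 3) | s.length = n ∧ SelfAvoiding s ∧ pathPos s n = e}

/-- Extract the natural number represented by a nonnegative integer-valued rational. -/
def qnat (q : ℚ) : ℕ := q.num.toNat

/-- The positive integers `L` along which the limit is taken: `μL` and
`(μ−1)L/2` are integers. -/
def goodLmu (μ : ℚ) (L : ℕ) : Prop :=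
  0 < L ∧ (∃ m : ℕ, μ * (L : ℚ) = (m : ℚ)) ∧ (∃ m : ℕ, (μ - 1) * (L : ℚ) / 2 = (m : ℚ))

open Topology

lemma pathPos_of_length_le {s : List (Fin 3)} {k : ℕ} (h : s.length ≤ k) :
    pathPos s k = (s.map dstep).sum := by
  rw [pathPos, List.take_of_length_le h]

lemma pathPos_add (s : List (Fin 3)) (j n : ℕ) :
    pathPos s (j + n) = pathPos s j + (((s.drop j).take n).map dstep).sum := by
  rw [pathPos, pathPos, List.take_add, List.map_append, List.sum_append]

def NoBacktrack (a b : Fin 3) : Prop := dstep a + dstep b ≠ 0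

lemma dstep_fst_nonneg (a : Fin 3) : 0 ≤ (dstep a).1 := by
  fin_cases a <;> simp [dstep]

lemma sum_map_dstep_fst_nonneg (t : List (Fin 3)) : 0 ≤ (t.map dstep).sum.1 := by
  induction t with
  | nil => simp
  | cons a t ih =>
    have := dstep_fst_nonneg a
    simp only [List.map_cons, List.sum_cons, Prod.fst_add]
    omega

lemma eq_of_noBacktrack {a b : Fin 3} (ha : (dstep a).1 = 0) (hb : (dstep b).1 = 0)
    (h : NoBacktrack a b) : b = a := by
  revert a b; unfold NoBacktrack; decide

lemma sum_map_dstep_eq_nsmul_of_isChain {a : Fin 3} {t : List (Fin 3)}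
    (h : (a :: t).IsChain NoBacktrack) (hx : ((a :: t).map dstep).sum.1 = 0) :
    (dstep a).1 = 0 ∧ ((a :: t).map dstep).sum = (t.length + 1) • dstep a := by
  induction t generalizing a with
  | nil => simpa using hx
  | cons b t ih =>
    rw [List.isChain_cons_cons] at h
    rw [List.map_cons, List.sum_cons, Prod.fst_add] at hx
    have := dstep_fst_nonneg a
    have := sum_map_dstep_fst_nonneg (b :: t)
    obtain ⟨hb, hsum⟩ := ih h.2 (by omega)
    have ha : (dstep a).1 = 0 := by omega
    refine ⟨ha, ?_⟩
    rw [List.map_cons, List.sum_cons, hsum, eq_of_noBacktrack ha hb h.1, List.length_cons,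
      succ_nsmul' _ (t.length + 1)]

lemma sum_map_dstep_ne_zero_of_isChain {t : List (Fin 3)} (h : t.IsChain NoBacktrack)
    (ht : t ≠ []) : (t.map dstep).sum ≠ 0 := by
  obtain ⟨a, t, rfl⟩ := List.exists_cons_of_ne_nil ht
  intro h0
  obtain ⟨hx, hsum⟩ := sum_map_dstep_eq_nsmul_of_isChain h (by rw [h0]; rfl)
  have hy := congrArg Prod.snd hsum
  rw [h0, Prod.smul_snd, Prod.snd_zero, nsmul_eq_mul] at hy
  have hvert : (dstep a).2 ≠ 0 := by revert hx; fin_cases a <;> simp [dstep]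
  exact hvert ((mul_eq_zero.mp hy.symm).resolve_left (by positivity))

theorem selfAvoiding_iff_isChain (s : List (Fin 3)) :
    SelfAvoiding s ↔ s.IsChain NoBacktrack := by
  constructor
  · intro hs
    refine List.isChain_iff_getElem.2 fun i hi hback => ?_
    have h2 := pathPos_add s i 2
    rw [List.drop_eq_getElem_cons (by omega), List.drop_eq_getElem_cons hi] at h2
    simp only [List.take_succ_cons, List.take_zero, List.map_cons, List.map_nil, List.sum_cons,
      List.sum_nil, add_zero, hback] at h2
    have := hs (i + 2) i hi (by omega) h2
    omega
  · intro hc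
    suffices ∀ j k, j < k → k ≤ s.length → pathPos s j ≠ pathPos s k by
      intro j k hj hk heq
      by_contra hne
      rcases Nat.lt_or_gt_of_ne hne with h | h
      · exact this j k h hk heq
      · exact this k j h hj heq.symm
    intro j k hjk hk heq
    obtain ⟨n, rfl⟩ := Nat.exists_eq_add_of_lt hjk
    rw [add_assoc, pathPos_add, left_eq_add] at heq
    refine sum_map_dstep_ne_zero_of_isChain ((hc.drop j).take _) ?_ heq
    rw [← List.length_pos_iff]
    simp only [List.length_take, List.length_drop]
    omega

def vflip : Fin 3 → Fin 3 := ![0, 2, 1]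

lemma vflip_involutive : Function.Involutive vflip := fun a => by fin_cases a <;> rfl

lemma noBacktrack_vflip_iff {a b : Fin 3} :
    NoBacktrack (vflip a) (vflip b) ↔ NoBacktrack a b := by
  revert a b; unfold NoBacktrack; decide

lemma noBacktrack_or_noBacktrack_vflip (a b : Fin 3) :
    NoBacktrack a b ∨ NoBacktrack a (vflip b) := by
  revert a b; unfold NoBacktrack; decide

lemma sum_map_dstep_map_vflip (t : List (Fin 3)) :
    ((t.map vflip).map dstep).sum = ((t.map dstep).sum.1, -(t.map dstep).sum.2) := by
  induction t with
  | nil => rfl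
  | cons a t ih =>
    have : dstep (vflip a) = ((dstep a).1, -(dstep a).2) := by fin_cases a <;> rfl
    simp only [List.map_cons, List.sum_cons, ih, this, Prod.mk_add_mk, Prod.fst_add,
      Prod.snd_add, neg_add]

lemma selfAvoiding_append_or_append_map_vflip {p q : List (Fin 3)} (hp : SelfAvoiding p)
    (hq : SelfAvoiding q) : SelfAvoiding (p ++ q) ∨ SelfAvoiding (p ++ q.map vflip) := by
  simp only [selfAvoiding_iff_isChain, List.isChain_append, List.isChain_map,
    noBacktrack_vflip_iff, List.head?_map, Option.mem_def, Option.map_eq_some_iff] at *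
  rcases hlast : p.getLast? with _ | x
  · simp [hp, hq]
  rcases hhead : q.head? with _ | y
  · simp [hp, hq]
  simpa [hp, hq] using noBacktrack_or_noBacktrack_vflip x y

def saPaths (n : ℕ) (e : ℤ × ℤ) : Set (List (Fin 3)) :=
  {s | s.length = n ∧ SelfAvoiding s ∧ (s.map dstep).sum = e}

lemma numPaths_eq_ncard_saPaths (n : ℕ) (e : ℤ × ℤ) : numPaths n e = (saPaths n e).ncard :=
  congrArg Set.ncard <| Set.ext fun _ => and_congr_right fun hs => by
    rw [pathPos_of_length_le hs.le]

lemma saPaths_finite (n : ℕ) (e : ℤ × ℤ) : (saPaths n e).Finite :=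
  (List.finite_length_eq (Fin 3) n).subset fun _ hs => hs.1

lemma numPaths_le_three_pow (n : ℕ) (e : ℤ × ℤ) : numPaths n e ≤ 3 ^ n := by
  rw [numPaths_eq_ncard_saPaths]
  calc (saPaths n e).ncard ≤ {s : List (Fin 3) | s.length = n}.ncard :=
        Set.ncard_le_ncard (fun _ hs => hs.1) (List.finite_length_eq (Fin 3) n)
    _ = 3 ^ n := by
        rw [← Nat.card_coe_set_eq]
        exact (Nat.card_eq_fintype_card (α := List.Vector (Fin 3) n)).trans (card_vector n)

lemma ncard_selfAvoiding_append_le {n₁ n₂ : ℕ} {e e' : ℤ × ℤ} (f : List (Fin 3) → List (Fin 3))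
    (hf : f.Injective) (hfq : ∀ q ∈ saPaths n₂ e', (f q).length = n₂ ∧ ((f q).map dstep).sum = e') :
    {st ∈ saPaths n₁ e ×ˢ saPaths n₂ e' | SelfAvoiding (st.1 ++ f st.2)}.ncard ≤
      (saPaths (n₁ + n₂) (e + e')).ncard := by
  refine Set.ncard_le_ncard_of_injOn (fun st => st.1 ++ f st.2) ?_ ?_ (saPaths_finite _ _)
  · rintro ⟨p, q⟩ ⟨⟨hp, hq⟩, hsa⟩
    obtain ⟨hlen, hsum⟩ := hfq q hq
    refine ⟨by simp [hp.1, hlen], hsa, ?_⟩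
    simp [hp.2.2, hsum]
  · rintro ⟨p, q⟩ ⟨⟨hp, -⟩, -⟩ ⟨p', q'⟩ ⟨⟨hp', -⟩, -⟩ h
    obtain ⟨rfl, h⟩ := List.append_inj h (hp.1.trans hp'.1.symm)
    exact Prod.ext rfl (hf h)

lemma numPaths_mul_le (n₁ n₂ : ℕ) (e : ℤ × ℤ) (x : ℤ) :
    numPaths n₁ e * numPaths n₂ (x, 0) ≤ 2 * numPaths (n₁ + n₂) (e + (x, 0)) := by
  simp only [numPaths_eq_ncard_saPaths, ← Set.ncard_prod, two_mul]
  set S := saPaths n₁ e ×ˢ saPaths n₂ (x, 0)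
  have hcover : S ⊆ {st ∈ S | SelfAvoiding (st.1 ++ id st.2)} ∪
      {st ∈ S | SelfAvoiding (st.1 ++ st.2.map vflip)} := fun st hst =>
    (selfAvoiding_append_or_append_map_vflip hst.1.2.1 hst.2.2.1).imp (⟨hst, ·⟩) (⟨hst, ·⟩)
  have hS : S.Finite := (saPaths_finite _ _).prod (saPaths_finite _ _)
  calc S.ncard ≤ _ := Set.ncard_le_ncard hcover (hS.subset (Set.union_subset
        (Set.sep_subset _ _) (Set.sep_subset _ _)))
    _ ≤ _ := Set.ncard_union_le _ _
    _ ≤ _ := add_le_add (ncard_selfAvoiding_append_le id Function.injective_id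
        fun q hq => ⟨hq.1, hq.2.2⟩)
      (ncard_selfAvoiding_append_le (List.map vflip)
        (List.map_injective_iff.2 vflip_involutive.injective)
        fun q hq => ⟨by simp [hq.1], by rw [sum_map_dstep_map_vflip, hq.2.2, neg_zero]⟩)

lemma one_le_numPaths (L k : ℕ) (h : 0 < L ∨ k = 0) : 1 ≤ numPaths (L + 2 * k) (L, 0) := by
  rw [numPaths_eq_ncard_saPaths]
  refine (Set.ncard_pos (saPaths_finite _ _)).2
    ⟨List.replicate k 1 ++ List.replicate L 0 ++ List.replicate k 2, by simp; ring, ?_, ?_⟩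
  · have hrel : ∀ c, NoBacktrack c c := by unfold NoBacktrack; decide
    have hturns : NoBacktrack 1 0 ∧ NoBacktrack 0 2 := by unfold NoBacktrack; decide
    rw [selfAvoiding_iff_isChain]
    rcases h with hL | rfl
    · simp [List.isChain_append, List.isChain_replicate_of_rel _ (hrel _), List.getLast?_replicate,
        List.head?_replicate, hL.ne', hturns]
    · simpa using List.isChain_replicate_of_rel L (hrel 0)
  · ext <;> simp [dstep]

lemma exists_tendsto_div_of_add_le_add {a : ℕ → ℝ} {C K : ℝ}
    (hsup : ∀ m n, a m + a n ≤ a (m + n) + C) (hle : ∀ n, a n ≤ C + K * n) :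
    ∃ c, Tendsto (fun n => a n / n) atTop (𝓝 c) := by
  have hsub : Subadditive (fun n => C - a n) := fun m n => by linarith [hsup m n]
  have hbdd : BddBelow (Set.range fun n : ℕ => (C - a n) / n) := by
    refine ⟨min 0 (-K), ?_⟩
    rintro _ ⟨n, rfl⟩
    rcases n.eq_zero_or_pos with rfl | hn
    · simp
    · rw [le_div_iff₀ (by exact_mod_cast hn)]
      nlinarith [hle n, min_le_right 0 (-K)]
  refine ⟨0 - hsub.lim, ((tendsto_const_div_atTop_nhds_zero_nat C).sub
    (hsub.tendsto_lim hbdd)).congr fun n => ?_⟩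
  ring

lemma exists_tendsto_log_numPaths_div (A k : ℕ) (hA : 0 < A) :
    ∃ c, Tendsto (fun t : ℕ => Real.log (numPaths ((A + 2 * k) * t) ((A * t : ℕ), 0)) / t)
      atTop (𝓝 c) := by
  have hpos : ∀ t, (0 : ℝ) < numPaths ((A + 2 * k) * t) ((A * t : ℕ), 0) := fun t => by
    have := one_le_numPaths (A * t) (k * t) (by rcases t.eq_zero_or_pos with rfl | ht <;> simp [*])
    rw [show A * t + 2 * (k * t) = (A + 2 * k) * t by ring] at this
    exact_mod_cast this
  refine exists_tendsto_div_of_add_le_add (C := Real.log 2) (K := (A + 2 * k) * Real.log 3)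
    (fun s t => ?_) (fun t => ?_)
  · have h := numPaths_mul_le ((A + 2 * k) * s) ((A + 2 * k) * t) ((A * s : ℕ), 0) (A * t : ℕ)
    rw [← mul_add, Prod.mk_add_mk, add_zero, ← Nat.cast_add, ← mul_add] at h
    rw [← Real.log_mul (hpos s).ne' (hpos t).ne', ← Real.log_mul (hpos _).ne' two_ne_zero,
      mul_comm _ (2 : ℝ)]
    exact Real.log_le_log (mul_pos (hpos s) (hpos t)) (by exact_mod_cast h)
  · calc Real.log (numPaths ((A + 2 * k) * t) ((A * t : ℕ), 0))
        ≤ Real.log (3 ^ ((A + 2 * k) * t)) :=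
          Real.log_le_log (hpos t) (by exact_mod_cast numPaths_le_three_pow _ _)
      _ = (A + 2 * k) * Real.log 3 * t := by rw [Real.log_pow]; push_cast; ring
      _ ≤ Real.log 2 + (A + 2 * k) * Real.log 3 * t := le_add_of_nonneg_left (by positivity)

lemma Filter.Tendsto.of_comp_mul_atTop {α : Type*} {l : Filter α} {f : ℕ → α} {D : ℕ}
    (hD : D ≠ 0) {S : Set ℕ} (hS : ∀ L ∈ S, D ∣ L) (h : Tendsto (fun t => f (D * t)) atTop l) :
    Tendsto f (atTop ⊓ 𝓟 S) l := by
  refine (h.comp ((Nat.tendsto_div_const_atTop hD).mono_left inf_le_left)).congr' ?_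
  filter_upwards [mem_inf_of_right (mem_principal_self S)] with L hL
  exact congrArg f (Nat.mul_div_cancel' (hS L hL))

lemma den_dvd_of_goodLmu {μ : ℚ} {L : ℕ} (h : goodLmu μ L) : ((μ - 1) / 2).den ∣ L := by
  obtain ⟨hL, -, m, hm⟩ := h
  have hν : (μ - 1) / 2 = Rat.divInt m L := by
    rw [Rat.divInt_eq_div, eq_div_iff (by positivity)]
    push_cast
    linarith
  rw [hν, ← Int.natCast_dvd_natCast]
  exact Rat.den_dvd m L

lemma qnat_mul_natCast_den_mul {μ : ℚ} (hμ : 1 ≤ μ) (t : ℕ) :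
    qnat (μ * ((((μ - 1) / 2).den * t : ℕ) : ℚ)) =
      (((μ - 1) / 2).den + 2 * ((μ - 1) / 2).num.toNat) * t := by
  set ν := (μ - 1) / 2
  have hnum : ((ν.num.toNat : ℤ) : ℚ) = ν * ν.den := by
    rw [Int.toNat_of_nonneg (Rat.num_nonneg.2 (by positivity)), Rat.mul_den_eq_num]
  have : μ * ((ν.den * t : ℕ) : ℚ) = (((ν.den + 2 * ν.num.toNat) * t : ℕ) : ℚ) := by
    push_cast at hnum ⊢
    rw [hnum]
    ring
  rw [this, qnat, Rat.num_natCast, Int.toNat_natCast]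

theorem stmt6 (μ : ℚ) (hμ : 1 ≤ μ) :
    ∃ c : ℝ,
      Tendsto (fun L : ℕ =>
          (1 / ((μ : ℝ) * (L : ℝ))) * Real.log (numPaths (qnat (μ * L)) ((L : ℤ), 0)))
        (atTop ⊓ 𝓟 {L : ℕ | goodLmu μ L}) (nhds c) := by
  set ν := (μ - 1) / 2
  obtain ⟨c, hc⟩ := exists_tendsto_log_numPaths_div ν.den ν.num.toNat ν.den_pos
  refine ⟨c / (μ * ν.den), Tendsto.of_comp_mul_atTop ν.den_ne_zero
    (fun L hL => den_dvd_of_goodLmu hL) ((hc.div_const _).congr fun t => ?_)⟩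
  rw [qnat_mul_natCast_den_mul hμ t]
  push_cast
  ring
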